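/- Fix $\tilde\xi \in \mathbb{C}$. For $n \in \mathbb{N}^*$, the small solution $\alpha_n$ of $(n\pi + \alpha_n)\tan(\alpha_n/2) = -i\tilde\xi$ satisfies the second-order expansion $\alpha_n = -\frac{2i}{\pi}\frac{\tilde\xi}{n} + \frac{4}{\pi^3}\frac{\tilde\xi^2}{n^3} + O(1/n^3)$ (the $\tilde\xi^2$ term being $\frac{4}{n\pi^3}\frac{\tilde\xi^2}{n^2}$). -/

import Mathlib

/-!
Put `x = α n / 2`. The equation says `tan x = c / (n L + α n)` (here `L = π`, `c = -i ξ̃`), and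
`tan z ~ z` at `0`, so `α n ~ 2c / (n L)`; in particular `α n = O(1/n)`. Solving the equation for
`c` gives the exact identity
`α n - 2c / (n L) = -2 (tan x - x) - 2 α n tan x / (n L)`,
whose right-hand side is `O(1/n³)` because `tan z - z = O(z³)`. The `ξ̃²` term of the expansion
is itself `O(1/n³)`, so it can be absorbed into the error.
-/

open Complex Filter Asymptotics Topology

lemma Complex.sin_sub_self_isBigO : (fun z : ℂ => sin z - z) =O[𝓝 0] fun z => z ^ 3 := by
  have h5 : (fun z : ℂ => sin z - (z - z ^ 3 / 6)) =O[𝓝 0] fun z => z ^ 5 := by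
    refine IsBigO.of_bound (1 / 100) ?_
    filter_upwards [Metric.closedBall_mem_nhds (0 : ℂ) one_pos] with z hz
    rw [mem_closedBall_zero_iff] at hz
    simpa [norm_pow, div_eq_inv_mul, mul_comm] using sin_bound hz
  refine ((h5.trans (isLittleO_pow_pow (by norm_num)).isBigO).sub
    ((isBigO_refl (fun z : ℂ => z ^ 3) _).const_mul_left (1 / 6))).congr_left fun z => ?_
  ring

lemma Complex.cos_sub_one_isBigO : (fun z : ℂ => cos z - 1) =O[𝓝 0] fun z => z ^ 2 := by
  have h4 : (fun z : ℂ => cos z - (1 - z ^ 2 / 2)) =O[𝓝 0] fun z => z ^ 4 := by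
    refine IsBigO.of_bound (5 / 96) ?_
    filter_upwards [Metric.closedBall_mem_nhds (0 : ℂ) one_pos] with z hz
    rw [mem_closedBall_zero_iff] at hz
    simpa [norm_pow, mul_comm] using cos_bound hz
  refine ((h4.trans (isLittleO_pow_pow (by norm_num)).isBigO).sub
    ((isBigO_refl (fun z : ℂ => z ^ 2) _).const_mul_left (1 / 2))).congr_left fun z => ?_
  ring

lemma Complex.tan_sub_self_isBigO : (fun z : ℂ => tan z - z) =O[𝓝 0] fun z => z ^ 3 := by
  have hcos : Tendsto cos (𝓝 0) (𝓝 1) := by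
    simpa using continuous_cos.tendsto (0 : ℂ)
  have hnum : (fun z : ℂ => (sin z - z) - z * (cos z - 1)) =O[𝓝 0] fun z => z ^ 3 :=
    sin_sub_self_isBigO.sub <| ((isBigO_refl _ _).mul cos_sub_one_isBigO).congr_right
      fun z => by ring
  refine (hnum.mul ((hcos.inv₀ one_ne_zero).isBigO_one ℂ)).congr' ?_ (by simp)
  filter_upwards [hcos.eventually_ne one_ne_zero] with z hz
  rw [tan_eq_sin_div_cos]
  field_simp
  ring

lemma Complex.tan_isEquivalent : tan ~[𝓝 0] id :=
  (tan_sub_self_isBigO.trans_isLittleO (isLittleO_pow_id (by norm_num))).isEquivalent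

lemma Asymptotics.IsEquivalent.eventually_ne_zero {α β : Type*} [NormedField β] {l : Filter α}
    {u v : α → β} (huv : u ~[l] v) (hv : ∀ᶠ x in l, v x ≠ 0) : ∀ᶠ x in l, u x ≠ 0 := by
  obtain ⟨φ, hφ, hu⟩ := huv.exists_eq_mul
  filter_upwards [hu, hφ.eventually_ne one_ne_zero, hv] with x hx hφx hvx
  rw [hx]
  exact mul_ne_zero hφx hvx

lemma isBigO_inv_natCast_mul (L : ℂ) :
    (fun n : ℕ => ((n : ℂ) * L)⁻¹) =O[atTop] fun n => (n : ℝ)⁻¹ :=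
  IsBigO.of_bound ‖L‖⁻¹ <| Eventually.of_forall fun n => by simp [mul_comm]

section TanHalf

variable {α : ℕ → ℂ} {L c : ℂ}

theorem isEquivalent_of_mul_tan_half_eq (hL : L ≠ 0)
    (heq : ∀ᶠ n : ℕ in atTop, ((n : ℂ) * L + α n) * tan (α n / 2) = c)
    (hα : Tendsto α atTop (𝓝 0)) :
    α ~[atTop] fun n => 2 * c / (n * L) := by
  have hx : Tendsto (fun n => α n / 2) atTop (𝓝 0) := by simpa using hα.div_const 2
  have hnL : ∀ᶠ n : ℕ in atTop, (n : ℂ) * L ≠ 0 := by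
    filter_upwards [eventually_ne_atTop 0] with n hn
    exact mul_ne_zero (Nat.cast_ne_zero.mpr hn) hL
  have hone : (fun _ => (1 : ℂ)) =o[atTop] fun n : ℕ => (n : ℂ) * L := by
    refine (isLittleO_one_left_iff ℂ).mpr ?_
    simpa [norm_mul] using tendsto_natCast_atTop_atTop.atTop_mul_const (norm_pos_iff.mpr hL)
  have hw : (fun n : ℕ => (n : ℂ) * L + α n) ~[atTop] fun n => n * L :=
    IsEquivalent.refl.add_isLittleO ((hα.isBigO_one ℂ).trans_isLittleO hone)
  have htan : (fun n => tan (α n / 2)) ~[atTop] fun n => c / (n * L) := by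
    refine (IsEquivalent.refl.div hw).congr_left ?_
    filter_upwards [heq, hw.eventually_ne_zero hnL] with n hn hwn
    simp only [Pi.div_apply]
    rw [← hn, mul_div_cancel_left₀ _ hwn]
  have hhalf := (IsEquivalent.refl (u := fun _ => (2 : ℂ))).mul
    ((tan_isEquivalent.comp_tendsto hx).symm.trans htan)
  refine (hhalf.congr_left (Eventually.of_forall fun n => ?_)).congr_right
    (Eventually.of_forall fun n => ?_)
  · simp [mul_div_cancel₀]
  · simp only [Pi.mul_apply]
    ring

theorem isBigO_inv_natCast_of_mul_tan_half_eq (hL : L ≠ 0)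
    (heq : ∀ᶠ n : ℕ in atTop, ((n : ℂ) * L + α n) * tan (α n / 2) = c)
    (hα : Tendsto α atTop (𝓝 0)) :
    α =O[atTop] fun n => (n : ℝ)⁻¹ :=
  (isEquivalent_of_mul_tan_half_eq hL heq hα).trans_isBigO <|
    ((isBigO_inv_natCast_mul L).const_mul_left (2 * c)).congr_left fun n => by ring

theorem isBigO_sub_of_mul_tan_half_eq (hL : L ≠ 0)
    (heq : ∀ᶠ n : ℕ in atTop, ((n : ℂ) * L + α n) * tan (α n / 2) = c)
    (hα : Tendsto α atTop (𝓝 0)) :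
    (fun n => α n - 2 * c / (n * L)) =O[atTop] fun n => (n : ℝ)⁻¹ ^ 3 := by
  have hx : Tendsto (fun n => α n / 2) atTop (𝓝 0) := by simpa using hα.div_const 2
  have hαO := isBigO_inv_natCast_of_mul_tan_half_eq hL heq hα
  have hxO : (fun n => α n / 2) =O[atTop] fun n => (n : ℝ)⁻¹ :=
    (hαO.const_mul_left (1 / 2)).congr_left fun n => by ring
  have hcubic : (fun n => tan (α n / 2) - α n / 2) =O[atTop] fun n => (n : ℝ)⁻¹ ^ 3 :=
    (tan_sub_self_isBigO.comp_tendsto hx).trans (hxO.pow 3)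
  have hprod : (fun n => α n * tan (α n / 2) * ((n : ℂ) * L)⁻¹) =O[atTop]
      fun n => (n : ℝ)⁻¹ ^ 3 := by
    refine ((hαO.mul ((tan_isEquivalent.comp_tendsto hx).trans_isBigO hxO)).mul
      (isBigO_inv_natCast_mul L)).congr_right fun n => ?_
    ring
  refine ((hcubic.const_mul_left (-2)).sub (hprod.const_mul_left 2)).congr' ?_ EventuallyEq.rfl
  filter_upwards [heq, eventually_ne_atTop 0] with n hn hn0
  have hnL : (n : ℂ) * L ≠ 0 := mul_ne_zero (Nat.cast_ne_zero.mpr hn0) hL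
  rw [← hn]
  field_simp
  ring

end TanHalf

theorem stmt_5 (ξt : ℂ) (α : ℕ → ℂ)
    (heq : ∀ n : ℕ, 1 ≤ n →
      ((n : ℂ) * Real.pi + α n) * Complex.tan (α n / 2) = -Complex.I * ξt)
    (hsmall : Tendsto α atTop (nhds 0)) :
    (fun n : ℕ => α n -
        (-(2 * Complex.I / Real.pi) * ξt / (n : ℂ) +
          (4 / (Real.pi : ℂ) ^ 3) * ξt ^ 2 / (n : ℂ) ^ 3))
      =O[atTop] fun n : ℕ => (1 : ℝ) / (n : ℝ) ^ 3 := by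
  have hπ : (Real.pi : ℂ) ≠ 0 := ofReal_ne_zero.mpr Real.pi_ne_zero
  have hfirst := isBigO_sub_of_mul_tan_half_eq hπ (eventually_atTop.mpr ⟨1, heq⟩) hsmall
  have hsecond : (fun n : ℕ => (4 / (Real.pi : ℂ) ^ 3) * ξt ^ 2 / (n : ℂ) ^ 3) =O[atTop]
      fun n => (n : ℝ)⁻¹ ^ 3 :=
    IsBigO.of_bound ‖(4 / (Real.pi : ℂ) ^ 3) * ξt ^ 2‖ <| Eventually.of_forall fun n => by
      simp [div_eq_mul_inv]
  refine (hfirst.sub hsecond).congr (fun n => ?_) fun n => ?_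
  · ring
  · simp
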